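/- Let f : ℂ × ℂ → ℂ be an entire function of two complex variables such that f(z, conj(z)) = 0 for all z ∈ ℂ. Then f is identically zero on ℂ × ℂ. -/

import Mathlib

/-!
Substituting `z = x + i y`, `w = x - i y` turns `f` into an entire function `F (x, y)` of two
variables which vanishes on `ℝ × ℝ`, since there `w = conj z`. By the one-variable identity
theorem, applied first in `x` for each real `y` and then in `y` for each complex `x`,
`F` vanishes identically; as the substitution is invertible, so does `f`.
-/

open Complex Filter Topology

variable {E : Type*} [NormedAddCommGroup E] [NormedSpace ℂ E] [CompleteSpace E]

theorem Differentiable.eq_zero_of_ofReal_eq_zero {g : ℂ → E} (hg : Differentiable ℂ g)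
    (h : ∀ x : ℝ, g x = 0) : g = 0 := by
  have hfreq : ∃ᶠ z in 𝓝[≠] (0 : ℂ), g z = 0 := by
    have hofReal : Tendsto ((↑) : ℝ → ℂ) (𝓝[≠] 0) (𝓝[≠] 0) :=
      continuous_ofReal.continuousWithinAt.tendsto_nhdsWithin fun x hx => by simpa using hx
    exact hofReal.frequently (Frequently.of_forall h)
  have hg_an : AnalyticOnNhd ℂ g Set.univ := analyticOnNhd_univ_iff_differentiable.mpr hg
  funext z
  exact hg_an.eqOn_zero_of_preconnected_of_frequently_eq_zero isPreconnected_univ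
    (Set.mem_univ 0) hfreq (Set.mem_univ z)

theorem Differentiable.eq_zero_of_ofReal_prod_eq_zero {F : ℂ × ℂ → E}
    (hF : Differentiable ℂ F) (h : ∀ x y : ℝ, F (x, y) = 0) : F = 0 := by
  have h_real_snd (y : ℝ) : (fun x : ℂ => F (x, y)) = 0 :=
    (hF.comp (differentiable_id.prodMk (differentiable_const _))).eq_zero_of_ofReal_eq_zero
      fun x => h x y
  have h_all (x : ℂ) : (fun y : ℂ => F (x, y)) = 0 :=
    (hF.comp ((differentiable_const _).prodMk differentiable_id)).eq_zero_of_ofReal_eq_zero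
      fun y => congrFun (h_real_snd y) x
  funext ⟨x, y⟩
  exact congrFun (h_all x) y

theorem stmt_11 (f : ℂ × ℂ → ℂ) (hf : Differentiable ℂ f)
    (h0 : ∀ z : ℂ, f (z, (starRingEnd ℂ) z) = 0) :
    ∀ p : ℂ × ℂ, f p = 0 := by
  set F : ℂ × ℂ → ℂ := fun q => f (q.1 + I * q.2, q.1 - I * q.2)
  have hF : Differentiable ℂ F := by fun_prop
  have hF_real (x y : ℝ) : F (x, y) = 0 := by
    have hconj : (starRingEnd ℂ) (x + I * y) = x - I * y := by simp [sub_eq_add_neg]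
    simpa [F, hconj] using h0 (x + I * y)
  rintro ⟨z, w⟩
  have hzw : f (z, w) = F ((z + w) / 2, -I * (z - w) / 2) := by
    simp only [F]
    congr 2
    · linear_combination (z - w) / 2 * I_sq
    · linear_combination -(z - w) / 2 * I_sq
  rw [hzw, hF.eq_zero_of_ofReal_prod_eq_zero hF_real, Pi.zero_apply]
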